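/- arXiv:1511.05830 — 5 statements merged into one kernel-verified Lean document; each statement's English description precedes it below -/
import Mathlib

section
/- Let 𝔤 be a stratified Lie algebra of step r with layers 𝔤₁,…,𝔤_r, and let 𝔭₁, 𝔭₂, 𝔨, the projections and the curvature operator R be as in the context. Let A ∈ 𝔭₂ and C ∈ 𝔨 satisfy [A,[A,C]] = 0, and suppose A = Σ_{j=1}^n [B_j¹, B_j²] with B_j¹, B_j² ∈ 𝔭₁. Then Σ_{j=1}^n R(B_j¹,B_j²)C = −[A,C] and Σ_{j=1}^n R(B_j¹,B_j²)[A,C] = 0; consequently, for every positive definite symmetric bilinear form g on 𝔨, defining the action of an endomorphism T of 𝔨 on g by (T·g)(u,v) = −g(Tu,v) − g(u,Tv), one has Σ_{j=1}^n (R(B_j¹,B_j²)·g)(C,[A,C]) = g([A,C],[A,C]); in particular, if [A,C] ≠ 0, then the curvature operators R(·,·) do not all annihilate g. (This is the algebraic core of the 'only if' direction of Proposition 4.4.) -/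
/-! Setup: stratified (Carnot) Lie algebra of step `r` with layers `g k`,
the decomposition `𝔤 = 𝔭₁ ⊕ 𝔭₂ ⊕ 𝔨`, the associated projections, and the
curvature operator `R(A,B)C = ∇_A ∇_B C - ∇_B ∇_A C - ∇_[A,B] C` of the
vertical connection `∇_A C = ⁅pr₂ A, C⁆`. -/

variable {L : Type*} [LieRing L] [LieAlgebra ℝ L]

/-- The linear span of brackets of elements of two subspaces: `[S, T]`. -/
def bracketSpan (S T : Submodule ℝ L) : Submodule ℝ L :=
  Submodule.span ℝ {x : L | ∃ s ∈ S, ∃ t ∈ T, x = ⁅s, t⁆}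

/-- `𝔭₁`: the sum of the odd-degree layers. -/
def oddPart (g : ℕ → Submodule ℝ L) : Submodule ℝ L :=
  ⨆ k ∈ {k : ℕ | Odd k}, g k

/-- `𝔭₂`: the sum of the even-degree layers of degree at most `⌊r/2⌋`. -/
def evenLowPart (r : ℕ) (g : ℕ → Submodule ℝ L) : Submodule ℝ L :=
  ⨆ k ∈ {k : ℕ | Even k ∧ k ≤ r / 2}, g k

/-- `𝔨`: the sum of the even-degree layers of degree greater than `⌊r/2⌋`. -/
def evenHighPart (r : ℕ) (g : ℕ → Submodule ℝ L) : Submodule ℝ L :=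
  ⨆ k ∈ {k : ℕ | Even k ∧ r / 2 < k}, g k

/-- The curvature operator of the vertical connection `∇_A C = ⁅pr₂ A, C⁆`:
`R(A,B)C = ∇_A (∇_B C) - ∇_B (∇_A C) - ∇_{⁅A,B⁆} C`. -/
def curv (pr2 : L →ₗ[ℝ] L) (A B C : L) : L :=
  ⁅pr2 A, ⁅pr2 B, C⁆⁆ - ⁅pr2 B, ⁅pr2 A, C⁆⁆ - ⁅pr2 ⁅A, B⁆, C⁆

/-!
Since `pr₂` vanishes on `𝔭₁`, each curvature term reduces to `R(B¹, B²) = -ad (pr₂ ⁅B¹, B²⁆)`, so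
`∑ⱼ R(Bⱼ¹, Bⱼ²) = -ad (pr₂ A) = -ad A`. Applied to `C` and to `⁅A, C⁆` this gives both curvature
identities; expanding the action on the form then leaves `g(⁅A, C⁆, ⁅A, C⁆)`, which is positive
when `⁅A, C⁆ ≠ 0` because the grading `⁅𝔤ₖ, 𝔤ₘ⁆ ⊆ 𝔤ₖ₊ₘ` puts `⁅A, C⁆` in `𝔨`.
-/

theorem Submodule.apply_add_eq_of_disjoint {R M : Type*} [Ring R] [AddCommGroup M] [Module R M]
    {P Q : Submodule R M} (hPQ : Disjoint P Q)
    (p : M → M) (hp : ∀ x, p x ∈ P ∧ x - p x ∈ Q) {a b : M} (ha : a ∈ P) (hb : b ∈ Q) :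
    p (a + b) = a := by
  obtain ⟨hpP, hpQ⟩ := hp (a + b)
  have hQ : p (a + b) - a ∈ Q := by
    convert sub_mem hb hpQ using 1
    abel
  exact sub_eq_zero.mp (Submodule.disjoint_def.mp hPQ _ (sub_mem hpP ha) hQ)

def BracketGraded (g : ℕ → Submodule ℝ L) : Prop :=
  ∀ k m : ℕ, ∀ a ∈ g k, ∀ b ∈ g m, ⁅a, b⁆ ∈ g (k + m)

namespace BracketGraded

variable {g : ℕ → Submodule ℝ L}

theorem of_generated (h0 : g 0 = ⊥)
    (hgen : ∀ k, 1 ≤ k → g (k + 1) ≤ bracketSpan (g 1) (g k))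
    (hdeg1 : ∀ k, ∀ a ∈ g 1, ∀ b ∈ g k, ⁅a, b⁆ ∈ g (1 + k)) : BracketGraded g := by
  intro k
  induction k using Nat.strong_induction_on with
  | _ k ih =>
  match k with
  | 0 =>
    intro m a ha b _
    rw [h0, Submodule.mem_bot] at ha
    simp [ha]
  | 1 => exact hdeg1
  | k + 2 =>
    intro m a ha b hb
    suffices hspan : bracketSpan (g 1) (g (k + 1)) ≤
        (g (k + 2 + m)).comap ((LieAlgebra.ad ℝ L : L →ₗ[ℝ] Module.End ℝ L).flip b) from
      hspan (hgen (k + 1) (by omega) ha)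
    refine Submodule.span_le.mpr ?_
    rintro _ ⟨s, hs, t, ht, rfl⟩
    have hstb := ih 1 (by omega) _ s hs _ (ih (k + 1) (by omega) m t ht b hb)
    have htsb := ih (k + 1) (by omega) _ t ht _ (ih 1 (by omega) m s hs b hb)
    rw [show 1 + (k + 1 + m) = k + 2 + m by omega] at hstb
    rw [show k + 1 + (1 + m) = k + 2 + m by omega] at htsb
    simpa [lie_lie] using sub_mem hstb htsb

theorem of_stratified (r : ℕ) (hzero : ∀ m : ℕ, m = 0 ∨ r < m → g m = ⊥)
    (hstrat : ∀ k : ℕ, 1 ≤ k → k + 1 ≤ r → g (k + 1) = bracketSpan (g 1) (g k))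
    (htop : ∀ a ∈ g 1, ∀ b ∈ g r, ⁅a, b⁆ = 0) : BracketGraded g := by
  refine of_generated (hzero 0 (.inl rfl)) (fun k hk => ?_) (fun k a ha b hb => ?_)
  · by_cases hkr : k + 1 ≤ r
    · exact (hstrat k hk hkr).le
    · simp [hzero (k + 1) (.inr (by omega))]
  · rcases lt_trichotomy k r with hkr | rfl | hrk
    · rcases Nat.eq_zero_or_pos k with rfl | hk
      · simp [(Submodule.mem_bot ℝ).mp (hzero 0 (.inl rfl) ▸ hb)]
      · rw [add_comm, hstrat k hk hkr]
        exact Submodule.subset_span ⟨a, ha, b, hb, rfl⟩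
    · simp [htop a ha b hb]
    · simp [(Submodule.mem_bot ℝ).mp (hzero k (.inr hrk) ▸ hb)]

theorem lie_mem_biSup (hg : BracketGraded g) {S T U : Set ℕ}
    (hST : ∀ k ∈ S, ∀ m ∈ T, k + m ∈ U) {a b : L} (ha : a ∈ ⨆ k ∈ S, g k)
    (hb : b ∈ ⨆ m ∈ T, g m) : ⁅a, b⁆ ∈ ⨆ n ∈ U, g n := by
  suffices hS : ⨆ k ∈ S, g k ≤
      (⨆ n ∈ U, g n).comap ((LieAlgebra.ad ℝ L : L →ₗ[ℝ] Module.End ℝ L).flip b) from hS ha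
  refine iSup₂_le fun k hk a ha => ?_
  suffices hT : ⨆ m ∈ T, g m ≤ (⨆ n ∈ U, g n).comap (LieAlgebra.ad ℝ L a) from hT hb
  refine iSup₂_le fun m hm b hb => ?_
  exact le_iSup₂ (f := fun n (_ : n ∈ U) => g n) (k + m) (hST k hk m hm) (hg k m a ha b hb)

end BracketGraded

theorem lie_mem_evenHighPart {r : ℕ} {g : ℕ → Submodule ℝ L} (hg : BracketGraded g) {A C : L}
    (hA : A ∈ evenLowPart r g) (hC : C ∈ evenHighPart r g) : ⁅A, C⁆ ∈ evenHighPart r g := by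
  refine hg.lie_mem_biSup ?_ hA hC
  rintro k ⟨hk, -⟩ m ⟨hm, hmr⟩
  exact ⟨hk.add hm, by omega⟩

theorem disjoint_evenLowPart_oddPart_sup_evenHighPart {r : ℕ} {g : ℕ → Submodule ℝ L}
    (hg : iSupIndep g) : Disjoint (evenLowPart r g) (oddPart g ⊔ evenHighPart r g) := by
  rw [oddPart, evenHighPart, ← iSup_union]
  refine hg.disjoint_biSup_biSup (Set.disjoint_left.mpr fun k hk hk' => ?_)
  rcases hk' with hodd | hhigh
  · exact Nat.not_odd_iff_even.mpr hk.1 hodd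
  · exact hhigh.2.not_ge hk.2

theorem map_add_eq_of_mem_evenLowPart {r : ℕ} {g : ℕ → Submodule ℝ L} (hg : iSupIndep g)
    {pr1 pr2 prk : L →ₗ[ℝ] L}
    (hproj : ∀ x : L, pr1 x ∈ oddPart g ∧ pr2 x ∈ evenLowPart r g ∧
      prk x ∈ evenHighPart r g ∧ pr1 x + pr2 x + prk x = x)
    {a b : L} (ha : a ∈ evenLowPart r g) (hb : b ∈ oddPart g ⊔ evenHighPart r g) :
    pr2 (a + b) = a := by
  refine Submodule.apply_add_eq_of_disjoint
    (disjoint_evenLowPart_oddPart_sup_evenHighPart hg) pr2 (fun x => ?_) ha hb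
  obtain ⟨h1, h2, h3, h4⟩ := hproj x
  rw [sub_eq_of_eq_add (h4.symm.trans (add_right_comm _ _ _))]
  exact ⟨h2, add_mem (Submodule.mem_sup_left h1) (Submodule.mem_sup_right h3)⟩

theorem curv_eq_neg_lie_of_map_eq_zero {pr2 : L →ₗ[ℝ] L} {B B' : L} (hB : pr2 B = 0)
    (hB' : pr2 B' = 0) (C : L) : curv pr2 B B' C = -⁅pr2 ⁅B, B'⁆, C⁆ := by
  simp [curv, hB, hB']

theorem sum_curv_eq_neg_lie {ι : Type*} [Fintype ι] {pr2 : L →ₗ[ℝ] L} {B1 B2 : ι → L}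
    (hB1 : ∀ j, pr2 (B1 j) = 0) (hB2 : ∀ j, pr2 (B2 j) = 0) (C : L) :
    ∑ j, curv pr2 (B1 j) (B2 j) C = -⁅pr2 (∑ j, ⁅B1 j, B2 j⁆), C⁆ := by
  rw [map_sum, sum_lie, ← Finset.sum_neg_distrib]
  exact Finset.sum_congr rfl fun j _ => curv_eq_neg_lie_of_map_eq_zero (hB1 j) (hB2 j) C

theorem LinearMap.sum_neg_apply_sub_apply {R M : Type*} [CommRing R] [AddCommGroup M] [Module R M]
    {ι : Type*} [Fintype ι] (b : M →ₗ[R] M →ₗ[R] R) (T : ι → M → M) (u v : M) :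
    ∑ j, (-(b (T j u) v) - b u (T j v)) = -(b (∑ j, T j u) v) - b u (∑ j, T j v) := by
  simp [Finset.sum_sub_distrib, map_sum]

theorem carnot_curvature_nonvanishing_of_p2_k_noncommute_general
    (r : ℕ) (g : ℕ → Submodule ℝ L)
    (hzero : ∀ m : ℕ, m = 0 ∨ r < m → g m = ⊥)
    (hinternal : DirectSum.IsInternal g)
    (hstrat : ∀ k : ℕ, 1 ≤ k → k + 1 ≤ r →
      g (k + 1) = bracketSpan (g 1) (g k))
    (htop : ∀ a ∈ g 1, ∀ b ∈ g r, ⁅a, b⁆ = 0)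
    (pr1 pr2 prk : L →ₗ[ℝ] L)
    (hproj : ∀ A : L, pr1 A ∈ oddPart g ∧ pr2 A ∈ evenLowPart r g ∧
      prk A ∈ evenHighPart r g ∧ pr1 A + pr2 A + prk A = A)
    (A C : L) (hA : A ∈ evenLowPart r g) (hC : C ∈ evenHighPart r g)
    (hAAC : ⁅A, ⁅A, C⁆⁆ = 0)
    (n : ℕ) (B1 B2 : Fin n → L)
    (hB1 : ∀ j, B1 j ∈ oddPart g) (hB2 : ∀ j, B2 j ∈ oddPart g)
    (hsum : A = ∑ j, ⁅B1 j, B2 j⁆) :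
    (∑ j, curv pr2 (B1 j) (B2 j) C) = -⁅A, C⁆ ∧
    (∑ j, curv pr2 (B1 j) (B2 j) ⁅A, C⁆) = 0 ∧
    ∀ gf : L →ₗ[ℝ] L →ₗ[ℝ] ℝ,
      (∀ u ∈ evenHighPart r g, ∀ v ∈ evenHighPart r g, gf u v = gf v u) →
      (∀ u ∈ evenHighPart r g, u ≠ 0 → 0 < gf u u) →
      (∑ j, (-(gf (curv pr2 (B1 j) (B2 j) C) ⁅A, C⁆)
          - gf C (curv pr2 (B1 j) (B2 j) ⁅A, C⁆))) = gf ⁅A, C⁆ ⁅A, C⁆ ∧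
      (⁅A, C⁆ ≠ 0 →
        ¬ (∀ A' B' : L, ∀ u ∈ evenHighPart r g, ∀ v ∈ evenHighPart r g,
          -(gf (curv pr2 A' B' u) v) - gf u (curv pr2 A' B' v) = 0)) := by
  have hindep := hinternal.submodule_iSupIndep
  have hpr2_odd : ∀ x ∈ oddPart g, pr2 x = 0 := fun x hx => by
    simpa using map_add_eq_of_mem_evenLowPart hindep hproj (zero_mem _) (Submodule.mem_sup_left hx)
  have hpr2_self : pr2 A = A := by
    simpa using map_add_eq_of_mem_evenLowPart hindep hproj hA (zero_mem _)
  have hcurv : ∀ v, ∑ j, curv pr2 (B1 j) (B2 j) v = -⁅A, v⁆ := fun v => by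
    rw [sum_curv_eq_neg_lie (fun j => hpr2_odd _ (hB1 j)) (fun j => hpr2_odd _ (hB2 j)), ← hsum,
      hpr2_self]
  have hAC : ⁅A, C⁆ ∈ evenHighPart r g :=
    lie_mem_evenHighPart (.of_stratified r hzero hstrat htop) hA hC
  have hcurv_AC : ∑ j, curv pr2 (B1 j) (B2 j) ⁅A, C⁆ = 0 := by rw [hcurv, hAAC, neg_zero]
  refine ⟨hcurv C, hcurv_AC, fun gf _ hpos => ?_⟩
  have haction : ∑ j, (-(gf (curv pr2 (B1 j) (B2 j) C) ⁅A, C⁆)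
      - gf C (curv pr2 (B1 j) (B2 j) ⁅A, C⁆)) = gf ⁅A, C⁆ ⁅A, C⁆ := by
    rw [LinearMap.sum_neg_apply_sub_apply gf (fun j => curv pr2 (B1 j) (B2 j)), hcurv C,
      hcurv_AC, map_neg, LinearMap.neg_apply, neg_neg, map_zero, sub_zero]
  refine ⟨haction, fun hne hflat => (hpos _ hAC hne).ne' ?_⟩
  rw [← haction]
  exact Finset.sum_eq_zero fun j _ => hflat _ _ C hC _ hAC

theorem carnot_curvature_nonvanishing_of_p2_k_noncommute
    (r : ℕ) (hr : 1 ≤ r) (g : ℕ → Submodule ℝ L)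
    (hzero : ∀ m : ℕ, m = 0 ∨ r < m → g m = ⊥)
    (hinternal : DirectSum.IsInternal g)
    (hstrat : ∀ k : ℕ, 1 ≤ k → k + 1 ≤ r →
      g (k + 1) = bracketSpan (g 1) (g k))
    (htop : ∀ a ∈ g 1, ∀ b ∈ g r, ⁅a, b⁆ = 0)
    (pr1 pr2 prk : L →ₗ[ℝ] L)
    (hproj : ∀ A : L, pr1 A ∈ oddPart g ∧ pr2 A ∈ evenLowPart r g ∧
      prk A ∈ evenHighPart r g ∧ pr1 A + pr2 A + prk A = A)
    (A C : L) (hA : A ∈ evenLowPart r g) (hC : C ∈ evenHighPart r g)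
    (hAAC : ⁅A, ⁅A, C⁆⁆ = 0)
    (n : ℕ) (B1 B2 : Fin n → L)
    (hB1 : ∀ j, B1 j ∈ oddPart g) (hB2 : ∀ j, B2 j ∈ oddPart g)
    (hsum : A = ∑ j, ⁅B1 j, B2 j⁆) :
    (∑ j, curv pr2 (B1 j) (B2 j) C) = -⁅A, C⁆ ∧
    (∑ j, curv pr2 (B1 j) (B2 j) ⁅A, C⁆) = 0 ∧
    ∀ gf : L →ₗ[ℝ] L →ₗ[ℝ] ℝ,
      (∀ u ∈ evenHighPart r g, ∀ v ∈ evenHighPart r g, gf u v = gf v u) →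
      (∀ u ∈ evenHighPart r g, u ≠ 0 → 0 < gf u u) →
      (∑ j, (-(gf (curv pr2 (B1 j) (B2 j) C) ⁅A, C⁆)
          - gf C (curv pr2 (B1 j) (B2 j) ⁅A, C⁆))) = gf ⁅A, C⁆ ⁅A, C⁆ ∧
      (⁅A, C⁆ ≠ 0 →
        ¬ (∀ A' B' : L, ∀ u ∈ evenHighPart r g, ∀ v ∈ evenHighPart r g,
          -(gf (curv pr2 A' B' u) v) - gf u (curv pr2 A' B' v) = 0)) :=
  carnot_curvature_nonvanishing_of_p2_k_noncommute_general r g hzero hinternal hstrat htop pr1 pr2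
    prk hproj A C hA hC hAAC n B1 B2 hB1 hB2 hsum
end

section
/- Let 𝔤 be a stratified Lie algebra of step r with layers 𝔤₁,…,𝔤_r, and let 𝔭₁, 𝔭₂, 𝔨, the projections and the curvature operator R be as in the context. Then for all A, B ∈ 𝔭₁ and C ∈ 𝔨, one has R(A,B)C = [pr_{𝔭₂}[B,A], C]. -/
/-! Setup: stratified (Carnot) Lie algebra of step `r` with layers `g k`,
the decomposition `𝔤 = 𝔭₁ ⊕ 𝔭₂ ⊕ 𝔨`, the associated projections, and the
curvature operator `R(A,B)C = ∇_A ∇_B C - ∇_B ∇_A C - ∇_[A,B] C` of the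
vertical connection `∇_A C = ⁅pr₂ A, C⁆`. -/

variable {L : Type*} [LieRing L] [LieAlgebra ℝ L]

/-! Since `𝔤 = 𝔭₁ ⊕ 𝔭₂ ⊕ 𝔨` is direct, the projection `pr_{𝔭₂}` vanishes on `𝔭₁`. For
`A, B ∈ 𝔭₁` both second-order terms of `R(A,B)C` therefore vanish, and what remains is
`-[pr_{𝔭₂}[A,B], C] = [pr_{𝔭₂}[B,A], C]`. -/

section ThreeSummands

variable {R M : Type*} [Ring R] [AddCommGroup M] [Module R M] {P Q K : Submodule R M}

lemma eq_zero_of_add_add_mem_of_disjoint (hP : Disjoint P (Q ⊔ K)) (hQK : Disjoint Q K)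
    {a b c : M} (ha : a ∈ P) (hb : b ∈ Q) (hc : c ∈ K) (habc : a + b + c ∈ P) : b = 0 := by
  have hbcP : b + c ∈ P := by
    simpa [add_assoc] using P.sub_mem habc ha
  have hbc : b + c = 0 :=
    (Submodule.disjoint_def.mp hP) _ hbcP (Submodule.add_mem_sup hb hc)
  have hbK : b ∈ K := by
    rw [eq_neg_of_add_eq_zero_left hbc]
    exact K.neg_mem hc
  exact (Submodule.disjoint_def.mp hQK) b hb hbK

end ThreeSummands

section Parts

variable {r : ℕ} {g : ℕ → Submodule ℝ L}

lemma disjoint_oddPart_evenLowPart_sup_evenHighPart (hg : iSupIndep g) :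
    Disjoint (oddPart g) (evenLowPart r g ⊔ evenHighPart r g) := by
  rw [oddPart, evenLowPart, evenHighPart, ← iSup_union]
  refine hg.disjoint_biSup_biSup (Set.disjoint_left.mpr ?_)
  rintro k (hodd : Odd k) (⟨heven, -⟩ | ⟨heven, -⟩) <;>
    exact Nat.not_even_iff_odd.mpr hodd heven

lemma disjoint_evenLowPart_evenHighPart (hg : iSupIndep g) :
    Disjoint (evenLowPart r g) (evenHighPart r g) :=
  hg.disjoint_biSup_biSup (Set.disjoint_left.mpr fun _ hlow hhigh => hhigh.2.not_ge hlow.2)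

lemma map_eq_zero_of_mem_oddPart (hg : iSupIndep g) {pr1 pr2 prk : L →ₗ[ℝ] L}
    (hproj : ∀ A : L, pr1 A ∈ oddPart g ∧ pr2 A ∈ evenLowPart r g ∧
      prk A ∈ evenHighPart r g ∧ pr1 A + pr2 A + prk A = A)
    {A : L} (hA : A ∈ oddPart g) : pr2 A = 0 := by
  obtain ⟨h1, h2, hk, hsum⟩ := hproj A
  exact eq_zero_of_add_add_mem_of_disjoint (disjoint_oddPart_evenLowPart_sup_evenHighPart hg)
    (disjoint_evenLowPart_evenHighPart hg) h1 h2 hk (hsum.symm ▸ hA)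

end Parts

lemma curv_eq_of_map_eq_zero {pr2 : L →ₗ[ℝ] L} {A B : L} (hA : pr2 A = 0) (hB : pr2 B = 0)
    (C : L) : curv pr2 A B C = ⁅pr2 ⁅B, A⁆, C⁆ := by
  rw [curv, hA, hB, ← lie_skew B A, map_neg, neg_lie, sub_self, zero_sub]

theorem carnot_curvature_on_p1_p1_general
    (r : ℕ) (g : ℕ → Submodule ℝ L)
    (hinternal : DirectSum.IsInternal g)
    (pr1 pr2 prk : L →ₗ[ℝ] L)
    (hproj : ∀ A : L, pr1 A ∈ oddPart g ∧ pr2 A ∈ evenLowPart r g ∧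
      prk A ∈ evenHighPart r g ∧ pr1 A + pr2 A + prk A = A)
 :
    ∀ A ∈ oddPart g, ∀ B ∈ oddPart g, ∀ C ∈ evenHighPart r g,
      curv pr2 A B C = ⁅pr2 ⁅B, A⁆, C⁆ := by
  have hg := hinternal.submodule_iSupIndep
  intro A hA B hB C _
  exact curv_eq_of_map_eq_zero (map_eq_zero_of_mem_oddPart hg hproj hA)
    (map_eq_zero_of_mem_oddPart hg hproj hB) C

theorem carnot_curvature_on_p1_p1
    (r : ℕ) (hr : 1 ≤ r) (g : ℕ → Submodule ℝ L)
    (hzero : ∀ m : ℕ, m = 0 ∨ r < m → g m = ⊥)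
    (hinternal : DirectSum.IsInternal g)
    (hstrat : ∀ k : ℕ, 1 ≤ k → k + 1 ≤ r →
      g (k + 1) = bracketSpan (g 1) (g k))
    (htop : ∀ a ∈ g 1, ∀ b ∈ g r, ⁅a, b⁆ = 0)
    (pr1 pr2 prk : L →ₗ[ℝ] L)
    (hproj : ∀ A : L, pr1 A ∈ oddPart g ∧ pr2 A ∈ evenLowPart r g ∧
      prk A ∈ evenHighPart r g ∧ pr1 A + pr2 A + prk A = A)
 :
    ∀ A ∈ oddPart g, ∀ B ∈ oddPart g, ∀ C ∈ evenHighPart r g,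
      curv pr2 A B C = ⁅pr2 ⁅B, A⁆, C⁆ :=
  carnot_curvature_on_p1_p1_general r g hinternal pr1 pr2 prk hproj
end

section
/- Let 𝔤 be a stratified Lie algebra of step r with layers 𝔤₁,…,𝔤_r, and let 𝔭₁, 𝔭₂, 𝔨 be as in the context. Set 𝔭 = 𝔭₁ ⊕ 𝔭₂. Then 𝔭 + [𝔭,𝔭] = 𝔤. (In Proposition 4.4 this expresses that the subbundle D obtained by left translation of 𝔭 is bracket-generating and equiregular of step 2.) -/
/-! Setup: stratified (Carnot) Lie algebra of step `r` with layers `g k`,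
the decomposition `𝔤 = 𝔭₁ ⊕ 𝔭₂ ⊕ 𝔨`, the associated projections, and the
curvature operator `R(A,B)C = ∇_A ∇_B C - ∇_B ∇_A C - ∇_[A,B] C` of the
vertical connection `∇_A C = ⁅pr₂ A, C⁆`. -/

variable {L : Type*} [LieRing L] [LieAlgebra ℝ L]

/-! Every even layer `𝔤_{k+1}` (`k` odd, `k + 1 ≤ r`) equals `[𝔤₁, 𝔤_k] ⊆ [𝔭₁, 𝔭₁]`, so already
`𝔭₁ + [𝔭₁, 𝔭₁] = 𝔤`, and enlarging `𝔭₁` to `𝔭` keeps this. -/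

theorem bracketSpan_mono {S S' T T' : Submodule ℝ L} (hS : S ≤ S') (hT : T ≤ T') :
    bracketSpan S T ≤ bracketSpan S' T' := by
  apply Submodule.span_mono
  rintro x ⟨s, hs, t, ht, rfl⟩
  exact ⟨s, hS hs, t, hT ht, rfl⟩

theorem le_oddPart (g : ℕ → Submodule ℝ L) {k : ℕ} (hk : Odd k) : g k ≤ oddPart g :=
  le_biSup g hk

theorem le_bracketSpan_oddPart_of_eq_bracketSpan (g : ℕ → Submodule ℝ L) {k : ℕ} (hk : Odd k)
    (hg : g (k + 1) = bracketSpan (g 1) (g k)) :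
    g (k + 1) ≤ bracketSpan (oddPart g) (oddPart g) :=
  hg ▸ bracketSpan_mono (le_oddPart g odd_one) (le_oddPart g hk)

theorem oddPart_sup_bracketSpan_oddPart_eq_top (r : ℕ) (g : ℕ → Submodule ℝ L)
    (hzero : ∀ m : ℕ, m = 0 ∨ r < m → g m = ⊥) (hspan : ⨆ k, g k = ⊤)
    (hstrat : ∀ k : ℕ, 1 ≤ k → k + 1 ≤ r → g (k + 1) = bracketSpan (g 1) (g k)) :
    oddPart g ⊔ bracketSpan (oddPart g) (oddPart g) = ⊤ := by
  refine eq_top_iff.2 (hspan ▸ iSup_le fun k => ?_)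
  rcases Nat.even_or_odd k with hk | hk
  · rcases Nat.lt_or_ge r k with hkr | hkr
    · simp [hzero k (Or.inr hkr)]
    obtain rfl | ⟨m, rfl⟩ : k = 0 ∨ ∃ m, k = m + 1 := by
      cases k <;> simp
    · simp [hzero 0 (Or.inl rfl)]
    · have hm : Odd m := by simpa [Nat.even_add_one] using hk
      exact le_sup_of_le_right
        (le_bracketSpan_oddPart_of_eq_bracketSpan g hm (hstrat m hm.pos hkr))
  · exact le_sup_of_le_left (le_oddPart g hk)

theorem carnot_p_bracket_generating_step_two_general
    (r : ℕ) (g : ℕ → Submodule ℝ L)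
    (hzero : ∀ m : ℕ, m = 0 ∨ r < m → g m = ⊥)
    (hinternal : DirectSum.IsInternal g)
    (hstrat : ∀ k : ℕ, 1 ≤ k → k + 1 ≤ r →
      g (k + 1) = bracketSpan (g 1) (g k))
 :
    (oddPart g ⊔ evenLowPart r g) ⊔
      bracketSpan (oddPart g ⊔ evenLowPart r g) (oddPart g ⊔ evenLowPart r g) = ⊤ := by
  refine top_unique ?_
  rw [← oddPart_sup_bracketSpan_oddPart_eq_top r g hzero hinternal.submodule_iSup_eq_top hstrat]
  exact sup_le_sup le_sup_left (bracketSpan_mono le_sup_left le_sup_left)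

theorem carnot_p_bracket_generating_step_two
    (r : ℕ) (hr : 1 ≤ r) (g : ℕ → Submodule ℝ L)
    (hzero : ∀ m : ℕ, m = 0 ∨ r < m → g m = ⊥)
    (hinternal : DirectSum.IsInternal g)
    (hstrat : ∀ k : ℕ, 1 ≤ k → k + 1 ≤ r →
      g (k + 1) = bracketSpan (g 1) (g k))
    (htop : ∀ a ∈ g 1, ∀ b ∈ g r, ⁅a, b⁆ = 0)
 :
    (oddPart g ⊔ evenLowPart r g) ⊔
      bracketSpan (oddPart g ⊔ evenLowPart r g) (oddPart g ⊔ evenLowPart r g) = ⊤ :=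
  carnot_p_bracket_generating_step_two_general r g hzero hinternal hstrat
end

section
/- Let 𝔤 be a Lie algebra over ℝ, let 𝔨 ⊆ 𝔤 be a Lie subalgebra, and let 𝔭 ⊆ 𝔤 be a linear subspace such that 𝔤 = 𝔭 ⊕ 𝔨 (direct sum of subspaces) and [k,p] ∈ 𝔭 for all k ∈ 𝔨, p ∈ 𝔭. Define ∇_A C = pr_𝔨[A,C] for A ∈ 𝔤, C ∈ 𝔨, and the curvature R(A,B)C = ∇_A(∇_B C) − ∇_B(∇_A C) − ∇_{[A,B]}C. Then for all A, B ∈ 𝔤 and C ∈ 𝔨, one has R(A,B)C = −[pr_𝔨[pr_𝔭 A, pr_𝔭 B], C]. (This is the curvature formula of Section 4.2, case (b), for a reductive complement.) -/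
/-!
On `𝔨` the connection only sees the vertical part of its direction: since `⁅𝔭, 𝔨⁆ ⊆ 𝔭`, we get
`∇_A C = ⁅pr_𝔨 A, C⁆`. Hence `R(A, B) = ad ⁅pr_𝔨 A, pr_𝔨 B⁆ - ad (pr_𝔨 ⁅A, B⁆)` by the Jacobi
identity, and expanding `⁅A, B⁆` along `𝔤 = 𝔭 ⊕ 𝔨` the mixed brackets lie in `𝔭`, so
`pr_𝔨 ⁅A, B⁆ = pr_𝔨 ⁅pr_𝔭 A, pr_𝔭 B⁆ + ⁅pr_𝔨 A, pr_𝔨 B⁆`.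
-/

section ReductiveDecomposition

variable {R L : Type*} [CommRing R] [LieRing L] [LieAlgebra R L]
  {k : LieSubalgebra R L} {p : Submodule R L} {prp prk : L →ₗ[R] L}

theorem prk_eq_self_of_mem (hproj : ∀ A : L, prp A ∈ p ∧ prk A ∈ k ∧ prp A + prk A = A)
    (hdisj : ∀ A : L, A ∈ p → A ∈ k → A = 0) {x : L} (hx : x ∈ k) : prk x = x := by
  obtain ⟨hxp, hxk, hsum⟩ := hproj x
  have hprp_mem_k : prp x ∈ k := by
    rw [eq_sub_of_add_eq hsum]
    exact k.sub_mem hx hxk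
  rw [hdisj _ hxp hprp_mem_k, zero_add] at hsum
  exact hsum

theorem prk_eq_zero_of_mem (hproj : ∀ A : L, prp A ∈ p ∧ prk A ∈ k ∧ prp A + prk A = A)
    (hdisj : ∀ A : L, A ∈ p → A ∈ k → A = 0) {x : L} (hx : x ∈ p) : prk x = 0 := by
  obtain ⟨hxp, hxk, hsum⟩ := hproj x
  refine hdisj _ ?_ hxk
  rw [eq_sub_of_add_eq' hsum]
  exact p.sub_mem hx hxp

theorem lie_mem_of_mem_of_mem_lieSubalgebra (hred : ∀ x ∈ k, ∀ y ∈ p, ⁅x, y⁆ ∈ p)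
    {y x : L} (hy : y ∈ p) (hx : x ∈ k) : ⁅y, x⁆ ∈ p := by
  rw [← lie_skew]
  exact p.neg_mem (hred x hx y hy)

theorem prk_lie_of_mem (hproj : ∀ A : L, prp A ∈ p ∧ prk A ∈ k ∧ prp A + prk A = A)
    (hdisj : ∀ A : L, A ∈ p → A ∈ k → A = 0) (hred : ∀ x ∈ k, ∀ y ∈ p, ⁅x, y⁆ ∈ p)
    (D : L) {C : L} (hC : C ∈ k) : prk ⁅D, C⁆ = ⁅prk D, C⁆ := by
  obtain ⟨hDp, hDk, hsum⟩ := hproj D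
  conv_lhs => rw [← hsum, add_lie, map_add]
  rw [prk_eq_zero_of_mem hproj hdisj (lie_mem_of_mem_of_mem_lieSubalgebra hred hDp hC),
    prk_eq_self_of_mem hproj hdisj (k.lie_mem hDk hC), zero_add]

theorem prk_lie (hproj : ∀ A : L, prp A ∈ p ∧ prk A ∈ k ∧ prp A + prk A = A)
    (hdisj : ∀ A : L, A ∈ p → A ∈ k → A = 0) (hred : ∀ x ∈ k, ∀ y ∈ p, ⁅x, y⁆ ∈ p)
    (A B : L) : prk ⁅A, B⁆ = prk ⁅prp A, prp B⁆ + ⁅prk A, prk B⁆ := by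
  obtain ⟨hAp, hAk, hAsum⟩ := hproj A
  obtain ⟨hBp, hBk, hBsum⟩ := hproj B
  have hexpand : ⁅A, B⁆ =
      ⁅prp A, prp B⁆ + ⁅prp A, prk B⁆ + ⁅prk A, prp B⁆ + ⁅prk A, prk B⁆ := by
    conv_lhs => rw [← hAsum, ← hBsum]
    rw [add_lie, lie_add, lie_add]
    abel
  rw [hexpand, map_add, map_add, map_add,
    prk_eq_zero_of_mem hproj hdisj (lie_mem_of_mem_of_mem_lieSubalgebra hred hAp hBk),
    prk_eq_zero_of_mem hproj hdisj (hred _ hAk _ hBp),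
    prk_eq_self_of_mem hproj hdisj (k.lie_mem hAk hBk), add_zero, add_zero]

end ReductiveDecomposition

/-- Curvature formula for the vertical connection `∇_A C = pr_𝔨 ⁅A, C⁆` associated
with a decomposition `𝔤 = 𝔭 ⊕ 𝔨` where `𝔨` is a Lie subalgebra and `⁅𝔨, 𝔭⁆ ⊆ 𝔭`:
`R(A,B)C = -⁅pr_𝔨 ⁅pr_𝔭 A, pr_𝔭 B⁆, C⁆`. -/
theorem reductive_vertical_curvature_formula {L : Type*} [LieRing L] [LieAlgebra ℝ L]
    (k : LieSubalgebra ℝ L) (p : Submodule ℝ L)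
    (prp prk : L →ₗ[ℝ] L)
    (hproj : ∀ A : L, prp A ∈ p ∧ prk A ∈ k ∧ prp A + prk A = A)
    (hdisj : ∀ A : L, A ∈ p → A ∈ k → A = 0)
    (hred : ∀ x ∈ k, ∀ y ∈ p, ⁅x, y⁆ ∈ p) :
    ∀ A B : L, ∀ C ∈ k,
      prk ⁅A, prk ⁅B, C⁆⁆ - prk ⁅B, prk ⁅A, C⁆⁆ - prk ⁅⁅A, B⁆, C⁆ =
        -⁅prk ⁅prp A, prp B⁆, C⁆ := by
  intro A B C hC
  have hprk_mem (D : L) : prk D ∈ k := (hproj D).2.1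
  have hconn (D : L) {E : L} (hE : E ∈ k) : prk ⁅D, E⁆ = ⁅prk D, E⁆ :=
    prk_lie_of_mem hproj hdisj hred D hE
  rw [hconn B hC, hconn A (k.lie_mem (hprk_mem B) hC), hconn A hC,
    hconn B (k.lie_mem (hprk_mem A) hC), hconn _ hC, prk_lie hproj hdisj hred, add_lie,
    lie_lie]
  abel
end

section
/- On ℝ⁴ with coordinates (x,y,z,w), let X and Y be the vector fields X(x,y,z,w) = (1,0,0,0) and Y(x,y,z,w) = (0,1,xw,−xz) (that is, X = ∂/∂x and Y = ∂/∂y + x(w ∂/∂z − z ∂/∂w)), and let D_p = span_ℝ{X(p), Y(p)} for p ∈ ℝ⁴. If γ = (γ₁,γ₂,γ₃,γ₄) : [0,1] → ℝ⁴ is a differentiable curve such that γ′(t) ∈ D_{γ(t)} for every t ∈ [0,1], then the function t ↦ γ₃(t)² + γ₄(t)² is constant on [0,1]. (This is the key computation behind the example of Remark 2.4 (b): every D-horizontal curve starting from a point with (z,w) ≠ (0,0) remains in the cylinder {z² + w² = const}.) -/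
/-!
Both `X` and `Y` are orthogonal to the radial field `(0, 0, z, w)` — `Y` moves `(z, w)` by `x`
times its rotation `(w, -z)` — so the derivative of `z² + w²` along a horizontal curve vanishes.
-/

lemma hasDerivAt_sq_add_sq_apply {ι : Type*} [Fintype ι] {γ γ' : ℝ → ι → ℝ} {t : ℝ}
    (h : HasDerivAt γ (γ' t) t) (i j : ι) :
    HasDerivAt (fun s => γ s i ^ 2 + γ s j ^ 2)
      (2 * (γ t i * γ' t i + γ t j * γ' t j)) t := by
  have hi := ((hasDerivAt_pi.mp h) i).fun_pow 2
  have hj := ((hasDerivAt_pi.mp h) j).fun_pow 2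
  exact (hi.add hj).congr_deriv (by ring)

lemma zw_orthogonal_of_mem_span (p v : Fin 4 → ℝ)
    (hv : v ∈ Submodule.span ℝ
      {(![1, 0, 0, 0] : Fin 4 → ℝ), ![0, 1, p 0 * p 3, -(p 0 * p 2)]}) :
    p 2 * v 2 + p 3 * v 3 = 0 := by
  obtain ⟨a, b, rfl⟩ := Submodule.mem_span_pair.mp hv
  simp only [Pi.add_apply, Pi.smul_apply, smul_eq_mul, Matrix.cons_val]
  ring

/-- On `ℝ⁴` with coordinates `(x, y, z, w)`, let `D` be spanned by the vector
fields `X = (1,0,0,0)` and `Y = (0,1,xw,-xz)`. Along any differentiable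
`D`-horizontal curve `γ : [0,1] → ℝ⁴`, the quantity `z² + w²` is constant. -/
theorem horizontal_curve_preserves_zw_radius
    (γ : ℝ → (Fin 4 → ℝ)) (γ' : ℝ → (Fin 4 → ℝ))
    (hderiv : ∀ t ∈ Set.Icc (0 : ℝ) 1, HasDerivAt γ (γ' t) t)
    (hhor : ∀ t ∈ Set.Icc (0 : ℝ) 1,
      γ' t ∈ Submodule.span ℝ
        {(![1, 0, 0, 0] : Fin 4 → ℝ),
         ![0, 1, γ t 0 * γ t 3, -(γ t 0 * γ t 2)]}) :
    ∀ t ∈ Set.Icc (0 : ℝ) 1,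
      (γ t 2) ^ 2 + (γ t 3) ^ 2 = (γ 0 2) ^ 2 + (γ 0 3) ^ 2 := by
  have hzero : ∀ t ∈ Set.Icc (0 : ℝ) 1,
      HasDerivAt (fun s => γ s 2 ^ 2 + γ s 3 ^ 2) 0 t := fun t ht => by
    simpa [zw_orthogonal_of_mem_span (γ t) (γ' t) (hhor t ht)] using
      hasDerivAt_sq_add_sq_apply (hderiv t ht) 2 3
  exact constant_of_has_deriv_right_zero
    (fun t ht => (hzero t ht).continuousAt.continuousWithinAt)
    (fun t ht => (hzero t (Set.mem_Icc_of_Ico ht)).hasDerivWithinAt)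
end
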